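/- Let A ∈ ℂ^{n1×n2×n3} and G ∈ ℂ^{n2×n1×n3}. Suppose G = U *_c [[S_r, O],[O, O]] *_c V^H, where U ∈ ℂ^{n2×n2×n3} and V ∈ ℂ^{n1×n1×n3} are unitary tensors and S_r ∈ ℂ^{r×r×n3} is an invertible F-diagonal tensor, and suppose A = V *_c [[X, B],[C, E]] *_c U^H with X ∈ ℂ^{r×r×n3}. Then the inverse of A along G exists if and only if X is an invertible tensor, in which case A^{∥G} = U *_c [[X^{-1}, O],[O, O]] *_c V^H. -/

import Mathlib

noncomputable section

/-- A third-order tensor: a family of frontal slices. -/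
abbrev Tensor (n1 n2 n3 : ℕ) : Type := Fin n3 → Matrix (Fin n1) (Fin n2) ℂ

namespace Tensor

/-- The block Toeplitz-plus-Hankel matrix `mat(A)` associated to a tensor. -/
def matT {n1 n2 n3 : ℕ} (A : Tensor n1 n2 n3) :
    Matrix (Fin n3 × Fin n1) (Fin n3 × Fin n2) ℂ := fun p q =>
  A ⟨p.1.1 - q.1.1 + (q.1.1 - p.1.1), by
        have h1 := p.1.isLt; have h2 := q.1.isLt; omega⟩ p.2 q.2 +
    (if h : p.1.1 + q.1.1 + 2 ≤ n3 then A ⟨p.1.1 + q.1.1 + 1, by omega⟩ p.2 q.2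
     else if h2 : n3 ≤ p.1.1 + q.1.1 then
       A ⟨2 * n3 - (p.1.1 + q.1.1) - 1, by have h1 := p.1.isLt; omega⟩ p.2 q.2
     else 0)

/-- `ten`, the inverse of `mat` on its range: the slices of a tensor are recovered
from the first block-column of its `mat` by an alternating sum. -/
def tenT {n1 n2 n3 : ℕ} (M : Matrix (Fin n3 × Fin n1) (Fin n3 × Fin n2) ℂ) :
    Tensor n1 n2 n3 := fun i => Matrix.of fun a b =>
  ∑ t : Fin n3, if i.1 ≤ t.1 then (-1 : ℂ) ^ (t.1 - i.1) * M (t, a) (⟨0, i.pos⟩, b) else 0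

/-- The C-product of two tensors: the unique tensor whose `mat` is `mat(A) * mat(B)`. -/
def cmul {n1 n2 l n3 : ℕ} (A : Tensor n1 n2 n3) (B : Tensor n2 l n3) : Tensor n1 l n3 :=
  tenT (matT A * matT B)

/-- The conjugate transpose of a tensor, taken slice-wise. -/
def conjT {n1 n2 n3 : ℕ} (A : Tensor n1 n2 n3) : Tensor n2 n1 n3 := fun i => (A i).conjTranspose

/-- The identity tensor: the tensor whose `mat` is the identity matrix. -/
def idT {n n3 : ℕ} : Tensor n n n3 := fun i => if i.1 = 0 then 1 else 0

/-- A tensor is unitary if `Qᴴ *c Q = Q *c Qᴴ = I`. -/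
def Unitary {n n3 : ℕ} (Q : Tensor n n n3) : Prop :=
  cmul (conjT Q) Q = idT ∧ cmul Q (conjT Q) = idT

/-- `X` is the inverse of the square tensor `B` under the C-product. -/
def IsInverse {n n3 : ℕ} (B X : Tensor n n n3) : Prop :=
  cmul B X = idT ∧ cmul X B = idT

/-- `X` is the Moore-Penrose inverse of `A` under the C-product. -/
def IsMP {n1 n2 n3 : ℕ} (A : Tensor n1 n2 n3) (X : Tensor n2 n1 n3) : Prop :=
  cmul (cmul A X) A = A ∧ cmul (cmul X A) X = X ∧
    conjT (cmul A X) = cmul A X ∧ conjT (cmul X A) = cmul X A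

/-- Powers of a square tensor with respect to the C-product. -/
def cpow {n n3 : ℕ} (A : Tensor n n n3) : ℕ → Tensor n n n3
  | 0 => idT
  | m + 1 => cmul (cpow A m) A

/-- `ind(A) = k`: `k` is the smallest nonnegative integer with
`rank(mat(A)^k) = rank(mat(A)^(k+1))`. -/
def IsIndex {n n3 : ℕ} (A : Tensor n n n3) (k : ℕ) : Prop :=
  (matT A ^ k).rank = (matT A ^ (k + 1)).rank ∧
    ∀ j < k, (matT A ^ j).rank ≠ (matT A ^ (j + 1)).rank

/-- `X` is the Drazin inverse of `A` (of index `k`) under the C-product. -/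
def IsDrazin {n n3 : ℕ} (A : Tensor n n n3) (k : ℕ) (X : Tensor n n n3) : Prop :=
  cmul (cpow A (k + 1)) X = cpow A k ∧ cmul (cmul X A) X = X ∧ cmul A X = cmul X A

/-- `X` is an inverse of `A` along `G` under the C-product. -/
def IsInvAlong {n1 n2 n3 : ℕ} (A : Tensor n1 n2 n3) (G X : Tensor n2 n1 n3) : Prop :=
  cmul (cmul X A) G = G ∧ cmul (cmul G A) X = G ∧
    (∃ U : Tensor n1 n1 n3, X = cmul G U) ∧
    (∃ V : Tensor n2 n2 n3, conjT X = cmul (conjT G) V)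

/-- All frontal slices are diagonal. -/
def FDiag {n1 n2 n3 : ℕ} (A : Tensor n1 n2 n3) : Prop :=
  ∀ (i : Fin n3) (a : Fin n1) (b : Fin n2), (a : ℕ) ≠ (b : ℕ) → A i a b = 0

/-- All frontal slices are upper triangular. -/
def FUpper {n1 n2 n3 : ℕ} (A : Tensor n1 n2 n3) : Prop :=
  ∀ (i : Fin n3) (a : Fin n1) (b : Fin n2), (b : ℕ) < (a : ℕ) → A i a b = 0

/-- All frontal slices are lower triangular. -/
def FLower {n1 n2 n3 : ℕ} (A : Tensor n1 n2 n3) : Prop :=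
  ∀ (i : Fin n3) (a : Fin n1) (b : Fin n2), (a : ℕ) < (b : ℕ) → A i a b = 0

/-- Slice-wise 2×2 block tensor `[[A, B],[C, D]]`. -/
def blockT {r s t u n3 : ℕ} (A : Tensor r t n3) (B : Tensor r u n3)
    (C : Tensor s t n3) (D : Tensor s u n3) : Tensor (r + s) (t + u) n3 := fun i =>
  Matrix.reindex finSumFinEquiv finSumFinEquiv (Matrix.fromBlocks (A i) (B i) (C i) (D i))

/-- The mode-3 product of a tensor with an `n3 × n3` matrix. -/
def mode3 {n1 n2 n3 : ℕ} (A : Tensor n1 n2 n3) (M : Matrix (Fin n3) (Fin n3) ℂ) :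
    Tensor n1 n2 n3 := fun l => ∑ i, M l i • A i

end Tensor

open Tensor


/-!
`mat` is injective, since `ten ∘ mat = id` by an alternating telescoping sum, and it is
multiplicative. For the latter, extend the slices of `A` to an even function `a` on
`ZMod (2 * n3)` vanishing at `n3`; then `mat(A)` has `(t, s)` block `a (t - s) + a (t + s + 1)`,
and folding `ZMod (2 * n3)` onto `Fin n3` shows that the product of two such matrices is the
one built from the cyclic convolution `a * b`. The convolution is even but need not vanish at
`n3`; subtracting a multiple of `x ↦ (-1) ^ x`, which the construction sends to zero, repairs
this. Hence the C-product is associative with unit `I`, reverses under `ᴴ`, and multiplies block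
tensors blockwise, so the statement becomes block-matrix algebra after conjugating by `U`, `V`.

If `W` inverts `X`, then `U [[W, O], [O, O]] Vᴴ` is an inverse along `G`, with range witnesses
built from `S_r⁻¹`. Conversely, writing `Y = G U₁` and `Vᴴ U₁ V = [[N₁, N₂], [N₃, N₄]]`, the
top-left block of `G A Y = G` reads `S_r X S_r N₁ = S_r`, so `X (S_r N₁) = I`; a one-sided
inverse is two-sided because `mat(X)` is a square matrix.
-/

theorem ZMod.sum_eq_sum_range {M : Type*} [AddCommMonoid M] {N : ℕ} [NeZero N]
    (f : ZMod N → M) : ∑ x, f x = ∑ k ∈ Finset.range N, f k :=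
  Finset.sum_nbij' ZMod.val Nat.cast (fun x _ => Finset.mem_range.2 (ZMod.val_lt x))
    (fun _ _ => Finset.mem_univ _) (fun x _ => ZMod.natCast_zmod_val x)
    (fun _ hk => ZMod.val_natCast_of_lt (Finset.mem_range.1 hk))
    (fun x _ => by rw [ZMod.natCast_zmod_val])

theorem ZMod.sum_two_mul_eq_sum_fin {M : Type*} [AddCommMonoid M] {n : ℕ} [NeZero n]
    (f : ZMod (2 * n) → M) (c : ZMod (2 * n)) :
    ∑ x, f x = ∑ u : Fin n, (f (c + u) + f (c - u - 1)) := by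
  have hmirror : ∀ k < n, ((n + (n - 1 - k) : ℕ) : ZMod (2 * n)) = -k - 1 := fun k hk => by
    have h : ((n + (n - 1 - k) + (k + 1) : ℕ) : ZMod (2 * n)) = 0 := by
      rw [show n + (n - 1 - k) + (k + 1) = 2 * n by omega, ZMod.natCast_self]
    push_cast at h ⊢
    linear_combination h
  rw [← Equiv.sum_comp (Equiv.addLeft c) f, ZMod.sum_eq_sum_range,
    show Finset.range (2 * n) = Finset.range (n + n) by rw [two_mul], Finset.sum_range_add,
    Equiv.coe_addLeft, ← Finset.sum_range_reflect (fun k => f (c + (n + k : ℕ))),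
    ← Finset.sum_add_distrib,
    ← Fin.sum_univ_eq_sum_range (fun k => f (c + k) + f (c + (n + (n - 1 - k) : ℕ)))]
  refine Fintype.sum_congr _ _ fun u => ?_
  rw [hmirror u u.isLt, sub_eq_add_neg c, add_sub_assoc]

theorem ZMod.neg_one_pow_val_add {n : ℕ} [NeZero n] (x y : ZMod (2 * n)) :
    (-1 : ℂ) ^ (x + y).val = (-1) ^ x.val * (-1) ^ y.val := by
  rw [ZMod.val_add, neg_one_pow_eq_pow_mod_two, Nat.mod_mod_of_dvd _ (dvd_mul_right 2 n),
    ← neg_one_pow_eq_pow_mod_two, pow_add]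

theorem ZMod.neg_one_pow_val_natCast {n : ℕ} (k : ℕ) :
    (-1 : ℂ) ^ (k : ZMod (2 * n)).val = (-1) ^ k := by
  rw [ZMod.val_natCast, neg_one_pow_eq_pow_mod_two, Nat.mod_mod_of_dvd _ (dvd_mul_right 2 n),
    ← neg_one_pow_eq_pow_mod_two]

theorem Finset.sum_range_alternating_telescope {R : Type*} [Ring R] (g : ℕ → R) {i n : ℕ}
    (hin : i ≤ n) :
    ∑ t ∈ Finset.range n, (if i ≤ t then (-1) ^ (t - i) * (g t + g (t + 1)) else 0) =
      g i - (-1) ^ (n - i) * g n := by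
  induction n, hin using Nat.le_induction with
  | base =>
    rw [Finset.sum_eq_zero fun t ht => if_neg (by simpa using ht), Nat.sub_self, pow_zero,
      one_mul, sub_self]
  | succ n hin ih =>
    rw [Finset.sum_range_succ, ih, if_pos hin, Nat.sub_add_comm hin, pow_succ]
    simp only [mul_add, mul_neg_one, neg_mul]
    abel

namespace Tensor

local infixl:70 " ⋆ " => cmul

variable {n n1 n2 n3 l : ℕ}

theorem tenT_matT (A : Tensor n1 n2 n3) : tenT (matT A) = A := by
  funext i
  ext a b
  let g : ℕ → ℂ := fun k => if h : k < n3 then A ⟨k, h⟩ a b else 0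
  have hcol : ∀ t : Fin n3, matT A (t, a) (⟨0, i.pos⟩, b) = g t + g (t + 1) := by
    intro t
    simp only [matT, g, Nat.sub_zero, Nat.zero_sub, add_zero, dif_pos t.isLt]
    congr 1
    split_ifs <;> first | rfl | omega
  have key := Finset.sum_range_alternating_telescope g i.isLt.le
  rw [show g n3 = 0 from dif_neg (lt_irrefl _), mul_zero, sub_zero,
    show g i = A i a b from dif_pos i.isLt] at key
  simp only [tenT, Matrix.of_apply, hcol, ← key]
  exact Fin.sum_univ_eq_sum_range
    (fun t => if i.1 ≤ t then (-1 : ℂ) ^ (t - i.1) * (g t + g (t + 1)) else 0) n3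

theorem matT_injective : Function.Injective (matT : Tensor n1 n2 n3 → _) :=
  Function.LeftInverse.injective tenT_matT

/-- The even extension of the slices to `ZMod (2 * n3)`, vanishing at `n3`. -/
def symExt (A : Tensor n1 n2 n3) (x : ZMod (2 * n3)) : Matrix (Fin n1) (Fin n2) ℂ :=
  if h : min x.val (2 * n3 - x.val) < n3 then A ⟨_, h⟩ else 0

theorem symExt_neg [NeZero n3] (A : Tensor n1 n2 n3) (x : ZMod (2 * n3)) :
    symExt A (-x) = symExt A x := by
  rcases eq_or_ne x 0 with rfl | hx
  · rw [neg_zero]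
  · have hlt := ZMod.val_lt x
    have hmin : min (-x).val (2 * n3 - (-x).val) = min x.val (2 * n3 - x.val) := by
      rw [ZMod.neg_val, if_neg hx]
      omega
    simp only [symExt, hmin]

theorem symExt_natCast (A : Tensor n1 n2 n3) {k m : ℕ} (hk : k < 2 * n3) (hm : m < n3)
    (h : min k (2 * n3 - k) = m) : symExt A k = A ⟨m, hm⟩ := by
  simp only [symExt, ZMod.val_natCast_of_lt hk, h, dif_pos hm]

theorem symExt_natCast_self [NeZero n3] (A : Tensor n1 n2 n3) : symExt A n3 = 0 := by
  have hmin : min ((n3 : ZMod (2 * n3)).val) (2 * n3 - (n3 : ZMod (2 * n3)).val) = n3 := by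
    rw [ZMod.val_natCast_of_lt (by have := NeZero.pos n3; omega)]
    omega
  simp only [symExt, hmin, lt_irrefl, dif_neg, not_false_eq_true]

def toeplitzHankel (c : ZMod (2 * n3) → Matrix (Fin n1) (Fin n2) ℂ) :
    Matrix (Fin n3 × Fin n1) (Fin n3 × Fin n2) ℂ := fun p q =>
  (c ((p.1 : ℕ) - (q.1 : ℕ)) + c ((p.1 : ℕ) + (q.1 : ℕ) + 1)) p.2 q.2

theorem matT_eq_toeplitzHankel [NeZero n3] (A : Tensor n1 n2 n3) :
    matT A = toeplitzHankel (symExt A) := by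
  ext ⟨t, a⟩ ⟨s, b⟩
  have ht := t.isLt
  have hs := s.isLt
  simp only [matT, toeplitzHankel, Matrix.add_apply]
  congr 1
  · rcases le_total (s : ℕ) t with hst | hts
    · rw [← Nat.cast_sub hst, symExt_natCast A (m := t - s + (s - t)) (by omega) _ (by omega)]
    · rw [← neg_sub, ← Nat.cast_sub hts, symExt_neg,
        symExt_natCast A (m := t - s + (s - t)) (by omega) _ (by omega)]
  · rw [← Nat.cast_add, ← Nat.cast_add_one]
    split_ifs with h1 h2
    · rw [symExt_natCast A (m := t + s + 1) (by omega) _ (by omega)]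
    · rw [symExt_natCast A (m := 2 * n3 - (t + s) - 1) (by omega) _ (by omega)]
    · rw [show (t : ℕ) + s + 1 = n3 by omega, symExt_natCast_self, Matrix.zero_apply]

theorem toeplitzHankel_sub (c d : ZMod (2 * n3) → Matrix (Fin n1) (Fin n2) ℂ) :
    toeplitzHankel (c - d) = toeplitzHankel c - toeplitzHankel d := by
  ext p q
  simp only [toeplitzHankel, Pi.sub_apply, Matrix.sub_apply, Matrix.add_apply]
  ring

theorem toeplitzHankel_neg_one_pow_smul [NeZero n3] (M : Matrix (Fin n1) (Fin n2) ℂ) :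
    toeplitzHankel (fun x : ZMod (2 * n3) => (-1 : ℂ) ^ x.val • M) = 0 := by
  ext ⟨t, i⟩ ⟨s, j⟩
  have hsign : (-1 : ℂ) ^ ((t : ℕ) - (s : ℕ) : ZMod (2 * n3)).val
      + (-1) ^ ((t : ℕ) + (s : ℕ) + 1 : ZMod (2 * n3)).val = 0 := by
    rw [show ((t : ℕ) + (s : ℕ) + 1 : ZMod (2 * n3)) = ((t : ℕ) - (s : ℕ))
        + ((2 * s + 1 : ℕ) : ZMod (2 * n3)) by push_cast; ring,
      ZMod.neg_one_pow_val_add, ZMod.neg_one_pow_val_natCast, pow_succ, pow_mul, neg_one_sq,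
      one_pow]
    ring
  simp only [toeplitzHankel, ← add_smul, hsign, zero_smul, Matrix.zero_apply]

def cyclicConv [NeZero n3] (a : ZMod (2 * n3) → Matrix (Fin n1) (Fin n2) ℂ)
    (b : ZMod (2 * n3) → Matrix (Fin n2) (Fin l) ℂ) (x : ZMod (2 * n3)) :
    Matrix (Fin n1) (Fin l) ℂ :=
  ∑ y, a (x - y) * b y

theorem cyclicConv_neg [NeZero n3] {a : ZMod (2 * n3) → Matrix (Fin n1) (Fin n2) ℂ}
    {b : ZMod (2 * n3) → Matrix (Fin n2) (Fin l) ℂ} (ha : ∀ x, a (-x) = a x)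
    (hb : ∀ x, b (-x) = b x) (x : ZMod (2 * n3)) : cyclicConv a b (-x) = cyclicConv a b x :=
  Fintype.sum_equiv (Equiv.neg _) _ _ fun y => by
    rw [Equiv.neg_apply, hb, sub_neg_eq_add, ← neg_add', ha]

theorem toeplitzHankel_mul [NeZero n3] (a : ZMod (2 * n3) → Matrix (Fin n1) (Fin n2) ℂ)
    {b : ZMod (2 * n3) → Matrix (Fin n2) (Fin l) ℂ} (hb : ∀ x, b (-x) = b x) :
    toeplitzHankel a * toeplitzHankel b = toeplitzHankel (cyclicConv a b) := by
  ext ⟨t, i⟩ ⟨s, j⟩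
  set T : ZMod (2 * n3) := ((t : ℕ) : ZMod (2 * n3))
  set S : ZMod (2 * n3) := ((s : ℕ) : ZMod (2 * n3))
  have hblocks : (toeplitzHankel a * toeplitzHankel b) (t, i) (s, j) =
      (∑ u : Fin n3, (a (T - (u : ℕ)) + a (T + (u : ℕ) + 1)) *
        (b ((u : ℕ) - S) + b ((u : ℕ) + S + 1))) i j := by
    simp only [Matrix.mul_apply, Fintype.sum_prod_type, Matrix.sum_apply, toeplitzHankel, T, S]
  rw [hblocks, toeplitzHankel]
  refine congrFun (congrFun ?_ i) j
  rw [cyclicConv, cyclicConv, ZMod.sum_two_mul_eq_sum_fin _ (-S),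
    ZMod.sum_two_mul_eq_sum_fin _ (S + 1), ← Finset.sum_add_distrib]
  refine Fintype.sum_congr _ _ fun u => ?_
  set U : ZMod (2 * n3) := ((u : ℕ) : ZMod (2 * n3))
  rw [show T - S - (-S + U) = T - U by ring, show T - S - (-S - U - 1) = T + U + 1 by ring,
    show T + S + 1 - (S + 1 + U) = T - U by ring,
    show T + S + 1 - (S + 1 - U - 1) = T + U + 1 by ring, show -S + U = U - S by ring,
    show S + 1 + U = U + S + 1 by ring, show -S - U - 1 = -(U + S + 1) by ring,
    show S + 1 - U - 1 = -(U - S) by ring, hb, hb]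
  simp only [Matrix.add_mul, Matrix.mul_add]
  abel

/-- The correction term, a multiple of `x ↦ (-1) ^ x.val` on the symmetric extension, is
invisible to `toeplitzHankel`. -/
def ofEven (c : ZMod (2 * n3) → Matrix (Fin n1) (Fin n2) ℂ) : Tensor n1 n2 n3 := fun i =>
  c (i : ℕ) - ((-1 : ℂ) ^ ((i : ℕ) + n3)) • c n3

theorem symExt_ofEven [NeZero n3] {c : ZMod (2 * n3) → Matrix (Fin n1) (Fin n2) ℂ}
    (hc : ∀ x, c (-x) = c x) :
    symExt (ofEven c) = c - fun x => (-1 : ℂ) ^ x.val • ((-1 : ℂ) ^ n3 • c n3) := by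
  funext x
  have hx := ZMod.val_lt x
  rw [Pi.sub_apply, smul_smul]
  rcases lt_trichotomy x.val n3 with h | h | h
  · conv_lhs => rw [← ZMod.natCast_zmod_val x]
    rw [symExt_natCast _ (m := x.val) hx h (by omega), ofEven, ZMod.natCast_zmod_val, pow_add]
  · rw [h, ← pow_add, ← two_mul, pow_mul, neg_one_sq, one_pow, one_smul,
      ← ZMod.natCast_zmod_val x, h, symExt_natCast_self, sub_self]
  · have hneg : x = -((2 * n3 - x.val : ℕ) : ZMod (2 * n3)) := by
      rw [Nat.cast_sub hx.le, ZMod.natCast_self, ZMod.natCast_zmod_val]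
      ring
    have hsign : (-1 : ℂ) ^ (2 * n3 - x.val + n3) = (-1) ^ x.val * (-1) ^ n3 := by
      rw [← pow_add, neg_one_pow_eq_pow_mod_two, neg_one_pow_eq_pow_mod_two (x.val + n3)]
      congr 1
      omega
    conv_lhs => rw [hneg, symExt_neg]
    rw [symExt_natCast _ (m := 2 * n3 - x.val) (by omega) (by omega) (by omega), ofEven, hsign,
      ← hc, ← hneg]

theorem matT_mul_eq_matT_ofEven [NeZero n3] (A : Tensor n1 n2 n3) (B : Tensor n2 l n3) :
    matT A * matT B = matT (ofEven (cyclicConv (symExt A) (symExt B))) := by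
  rw [matT_eq_toeplitzHankel, matT_eq_toeplitzHankel, matT_eq_toeplitzHankel,
    symExt_ofEven (cyclicConv_neg (symExt_neg A) (symExt_neg B)), toeplitzHankel_sub,
    toeplitzHankel_neg_one_pow_smul, sub_zero, toeplitzHankel_mul _ (symExt_neg B)]

theorem matT_cmul (A : Tensor n1 n2 n3) (B : Tensor n2 l n3) :
    matT (A ⋆ B) = matT A * matT B := by
  rcases eq_zero_or_neZero n3 with rfl | _
  · exact Matrix.ext fun p _ => p.1.elim0
  · rw [cmul, matT_mul_eq_matT_ofEven, tenT_matT]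

theorem matT_zero : matT (0 : Tensor n1 n2 n3) = 0 := by
  ext p q
  simp only [matT, Pi.zero_apply, Matrix.zero_apply]
  split_ifs <;> simp

theorem matT_add (A B : Tensor n1 n2 n3) : matT (A + B) = matT A + matT B := by
  ext p q
  simp only [matT, Pi.add_apply, Matrix.add_apply]
  split_ifs <;> ring

theorem matT_idT : matT (idT : Tensor n n n3) = 1 := by
  ext ⟨t, a⟩ ⟨s, b⟩
  simp only [matT, idT, Matrix.one_apply, Prod.mk.injEq, Fin.ext_iff]
  split_ifs <;> simp_all [Matrix.one_apply, Fin.ext_iff] <;> omega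

theorem matT_conjT (A : Tensor n1 n2 n3) : matT (conjT A) = (matT A).conjTranspose := by
  ext ⟨t, a⟩ ⟨s, b⟩
  simp only [matT, conjT, Matrix.conjTranspose_apply, star_add,
    show (s : ℕ) - t + (t - s) = t - s + (s - t) by omega, add_comm (s : ℕ) t]
  split_ifs <;> simp

theorem cmul_assoc (A : Tensor n1 n2 n3) (B : Tensor n2 l n3) (C : Tensor l n n3) :
    A ⋆ B ⋆ C = A ⋆ (B ⋆ C) :=
  matT_injective <| by simp only [matT_cmul, Matrix.mul_assoc]

theorem cmul_idT (A : Tensor n1 n2 n3) : A ⋆ idT = A :=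
  matT_injective <| by rw [matT_cmul, matT_idT, Matrix.mul_one]

theorem idT_cmul (A : Tensor n1 n2 n3) : idT ⋆ A = A :=
  matT_injective <| by rw [matT_cmul, matT_idT, Matrix.one_mul]

theorem cmul_zero (A : Tensor n1 n2 n3) : A ⋆ (0 : Tensor n2 l n3) = 0 :=
  matT_injective <| by simp only [matT_cmul, matT_zero, Matrix.mul_zero]

theorem zero_cmul (A : Tensor n2 l n3) : (0 : Tensor n1 n2 n3) ⋆ A = 0 :=
  matT_injective <| by simp only [matT_cmul, matT_zero, Matrix.zero_mul]

theorem conjT_zero : conjT (0 : Tensor n1 n2 n3) = 0 :=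
  funext fun _ => Matrix.conjTranspose_zero

theorem conjT_conjT (A : Tensor n1 n2 n3) : conjT (conjT A) = A :=
  funext fun i => Matrix.conjTranspose_conjTranspose (A i)

theorem conjT_cmul (A : Tensor n1 n2 n3) (B : Tensor n2 l n3) :
    conjT (A ⋆ B) = conjT B ⋆ conjT A :=
  matT_injective <| by
    rw [matT_conjT, matT_cmul, matT_cmul, matT_conjT, matT_conjT, Matrix.conjTranspose_mul]

theorem isInverse_of_cmul_eq_idT {X W : Tensor n n n3} (h : X ⋆ W = idT) : IsInverse X W := by
  refine ⟨h, matT_injective ?_⟩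
  rw [matT_cmul, matT_idT, ← mul_eq_one_comm, ← matT_cmul, h, matT_idT]

section Blocks

variable {r s t u r' s' : ℕ}

theorem matT_apply_congr {m1 m2 : ℕ} {T : Tensor n1 n2 n3} {T' : Tensor m1 m2 n3}
    {a : Fin n1} {b : Fin n2} {a' : Fin m1} {b' : Fin m2} (h : ∀ i, T i a b = T' i a' b')
    (i j : Fin n3) : matT T (i, a) (j, b) = matT T' (i, a') (j, b') := by
  simp only [matT, h]

def blockEquiv (n3 m k : ℕ) : (Fin n3 × Fin m) ⊕ (Fin n3 × Fin k) ≃ Fin n3 × Fin (m + k) :=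
  (Equiv.prodSumDistrib (Fin n3) (Fin m) (Fin k)).symm.trans
    ((Equiv.refl (Fin n3)).prodCongr finSumFinEquiv)

theorem matT_blockT (A : Tensor r t n3) (B : Tensor r u n3) (C : Tensor s t n3)
    (D : Tensor s u n3) :
    matT (blockT A B C D) = (Matrix.fromBlocks (matT A) (matT B) (matT C) (matT D)).submatrix
      (blockEquiv n3 r s).symm (blockEquiv n3 t u).symm := by
  ext ⟨i, a⟩ ⟨j, b⟩
  obtain ⟨a, rfl⟩ := finSumFinEquiv.surjective a
  obtain ⟨b, rfl⟩ := finSumFinEquiv.surjective b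
  rcases a with a | a <;> rcases b with b | b <;>
    simpa [blockEquiv, blockT] using matT_apply_congr (fun k => by simp [blockT]) i j

theorem blockT_cmul_blockT (A : Tensor r t n3) (B : Tensor r u n3) (C : Tensor s t n3)
    (D : Tensor s u n3) (A' : Tensor t r' n3) (B' : Tensor t s' n3) (C' : Tensor u r' n3)
    (D' : Tensor u s' n3) :
    blockT A B C D ⋆ blockT A' B' C' D' =
      blockT (A ⋆ A' + B ⋆ C') (A ⋆ B' + B ⋆ D') (C ⋆ A' + D ⋆ C') (C ⋆ B' + D ⋆ D') :=
  matT_injective <| by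
    simp only [matT_cmul, matT_blockT, Matrix.submatrix_mul_equiv, Matrix.fromBlocks_multiply,
      matT_add]

theorem conjT_blockT (A : Tensor r t n3) (B : Tensor r u n3) (C : Tensor s t n3)
    (D : Tensor s u n3) :
    conjT (blockT A B C D) = blockT (conjT A) (conjT C) (conjT B) (conjT D) :=
  funext fun i => by
    simp only [conjT, blockT, Matrix.conjTranspose_reindex, Matrix.fromBlocks_conjTranspose]

theorem blockT_inj {A A' : Tensor r t n3} {B B' : Tensor r u n3} {C C' : Tensor s t n3}
    {D D' : Tensor s u n3} :
    blockT A B C D = blockT A' B' C' D' ↔ A = A' ∧ B = B' ∧ C = C' ∧ D = D' := by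
  simp only [funext_iff, blockT, (Matrix.reindex _ _).injective.eq_iff, Matrix.fromBlocks_inj,
    forall_and]

theorem exists_eq_blockT (T : Tensor (r + s) (t + u) n3) :
    ∃ A B C D, T = blockT A B C D := by
  let M i := Matrix.reindex finSumFinEquiv.symm finSumFinEquiv.symm (T i)
  refine ⟨fun i => (M i).toBlocks₁₁, fun i => (M i).toBlocks₁₂, fun i => (M i).toBlocks₂₁,
    fun i => (M i).toBlocks₂₂, funext fun i => ?_⟩
  simp only [blockT, Matrix.fromBlocks_toBlocks, M, Matrix.reindex_apply,
    Matrix.submatrix_submatrix, Equiv.symm_symm, Equiv.self_comp_symm, Matrix.submatrix_id_id]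

end Blocks

section Conjugation

variable {m k : ℕ}

theorem cmul_conj_cmul_conj (U : Tensor n n n3) {V : Tensor m m n3} (W : Tensor k k n3)
    (hV : conjT V ⋆ V = idT) (P : Tensor n m n3) (Q : Tensor m k n3) :
    U ⋆ P ⋆ conjT V ⋆ (V ⋆ Q ⋆ conjT W) = U ⋆ (P ⋆ Q) ⋆ conjT W := by
  simp only [cmul_assoc]
  rw [← cmul_assoc (conjT V) V, hV, idT_cmul]

theorem conjT_cmul_cmul_conjT (U : Tensor n n n3) (P : Tensor n m n3) (V : Tensor m m n3) :
    conjT (U ⋆ P ⋆ conjT V) = V ⋆ conjT P ⋆ conjT U := by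
  simp only [conjT_cmul, conjT_conjT, cmul_assoc]

theorem conj_injective {U : Tensor n n n3} {V : Tensor m m n3} (hU : conjT U ⋆ U = idT)
    (hV : conjT V ⋆ V = idT) {P Q : Tensor n m n3} (h : U ⋆ P ⋆ conjT V = U ⋆ Q ⋆ conjT V) :
    P = Q := by
  have key : ∀ P : Tensor n m n3, conjT U ⋆ (U ⋆ P ⋆ conjT V) ⋆ V = P := fun P => by
    simp only [cmul_assoc]
    rw [hV, cmul_idT, ← cmul_assoc, hU, idT_cmul]
  rw [← key P, h, key]

end Conjugation

section InverseAlong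

variable {r p q : ℕ} {U : Tensor (r + q) (r + q) n3} {V : Tensor (r + p) (r + p) n3}
  {Sr Sr' X : Tensor r r n3} {B : Tensor r q n3} {C : Tensor p r n3} {E : Tensor p q n3}

theorem isInvAlong_of_isInverse (hU : conjT U ⋆ U = idT) (hV : conjT V ⋆ V = idT)
    (hSr : IsInverse Sr Sr') {W : Tensor r r n3} (hX : IsInverse X W) :
    IsInvAlong (V ⋆ blockT X B C E ⋆ conjT U) (U ⋆ blockT Sr 0 0 0 ⋆ conjT V)
      (U ⋆ blockT W 0 0 0 ⋆ conjT V) := by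
  refine ⟨?_, ?_, ⟨V ⋆ blockT (Sr' ⋆ W) 0 0 0 ⋆ conjT V, ?_⟩,
    ⟨U ⋆ blockT (conjT (W ⋆ Sr')) 0 0 0 ⋆ conjT U, ?_⟩⟩
  · rw [cmul_conj_cmul_conj _ _ hV, cmul_conj_cmul_conj _ _ hU]
    simp only [blockT_cmul_blockT, cmul_zero, zero_cmul, add_zero, hX.2, idT_cmul]
  · rw [cmul_conj_cmul_conj _ _ hV, cmul_conj_cmul_conj _ _ hU]
    simp only [blockT_cmul_blockT, cmul_zero, zero_cmul, add_zero, cmul_assoc, hX.1, cmul_idT]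
  · rw [cmul_conj_cmul_conj _ _ hV]
    simp only [blockT_cmul_blockT, cmul_zero, zero_cmul, add_zero, ← cmul_assoc, hSr.1,
      idT_cmul]
  · rw [conjT_cmul_cmul_conjT, conjT_cmul_cmul_conjT, cmul_conj_cmul_conj _ _ hU]
    simp only [conjT_blockT, conjT_zero, blockT_cmul_blockT, cmul_zero, zero_cmul, add_zero,
      ← conjT_cmul, cmul_assoc, hSr.2, cmul_idT]

theorem exists_isInverse_of_isInvAlong (hU : conjT U ⋆ U = idT) (hV : Unitary V)
    (hSr : IsInverse Sr Sr') {Y : Tensor (r + q) (r + p) n3}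
    (hY : IsInvAlong (V ⋆ blockT X B C E ⋆ conjT U) (U ⋆ blockT Sr 0 0 0 ⋆ conjT V) Y) :
    ∃ W, IsInverse X W := by
  obtain ⟨-, hGAY, ⟨U1, rfl⟩, -⟩ := hY
  obtain ⟨N1, N2, N3, N4, hN⟩ := exists_eq_blockT (conjT V ⋆ U1 ⋆ V)
  have hU1 : U1 = V ⋆ blockT N1 N2 N3 N4 ⋆ conjT V := by
    simp only [← hN, cmul_assoc]
    rw [hV.2, cmul_idT, ← cmul_assoc, hV.2, idT_cmul]
  rw [hU1, cmul_conj_cmul_conj _ _ hV.1, cmul_conj_cmul_conj _ _ hV.1,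
    cmul_conj_cmul_conj _ _ hU] at hGAY
  simp only [blockT_cmul_blockT, cmul_zero, zero_cmul, add_zero] at hGAY
  have h11 : Sr ⋆ X ⋆ (Sr ⋆ N1) = Sr := (blockT_inj.1 (conj_injective hU hV.1 hGAY)).1
  refine ⟨Sr ⋆ N1, isInverse_of_cmul_eq_idT ?_⟩
  calc X ⋆ (Sr ⋆ N1) = Sr' ⋆ (Sr ⋆ X ⋆ (Sr ⋆ N1)) := by
        simp only [cmul_assoc]
        rw [← cmul_assoc Sr', hSr.2, idT_cmul]
    _ = idT := by rw [h11, hSr.2]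

end InverseAlong

end Tensor

theorem stmt10_general {r p q n3 : ℕ} (A : Tensor (r + p) (r + q) n3)
    (G : Tensor (r + q) (r + p) n3)
    (U : Tensor (r + q) (r + q) n3) (V : Tensor (r + p) (r + p) n3)
    (Sr X : Tensor r r n3) (B : Tensor r q n3) (C : Tensor p r n3) (E : Tensor p q n3)
    (hU : Unitary U) (hV : Unitary V)
    (hSrInv : ∃ W, IsInverse Sr W)
    (hG : G = cmul (cmul U (blockT Sr 0 0 0)) (conjT V))
    (hA : A = cmul (cmul V (blockT X B C E)) (conjT U)) :
    ((∃ Y, IsInvAlong A G Y) ↔ ∃ W, IsInverse X W) ∧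
      ∀ W, IsInverse X W →
        IsInvAlong A G (cmul (cmul U (blockT W 0 0 0)) (conjT V)) := by
  obtain ⟨Sr', hSr⟩ := hSrInv
  subst hA hG
  have hsuff (W) (hX : IsInverse X W) :=
    isInvAlong_of_isInverse (B := B) (C := C) (E := E) hU.1 hV.1 hSr hX
  exact ⟨⟨fun ⟨_, hY⟩ => exists_isInverse_of_isInvAlong hU.1 hV hSr hY,
    fun ⟨W, hX⟩ => ⟨_, hsuff W hX⟩⟩, hsuff⟩

theorem stmt10 {r p q n3 : ℕ} (A : Tensor (r + p) (r + q) n3)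
    (G : Tensor (r + q) (r + p) n3)
    (U : Tensor (r + q) (r + q) n3) (V : Tensor (r + p) (r + p) n3)
    (Sr X : Tensor r r n3) (B : Tensor r q n3) (C : Tensor p r n3) (E : Tensor p q n3)
    (hU : Unitary U) (hV : Unitary V)
    (hSr : FDiag Sr) (hSrInv : ∃ W, IsInverse Sr W)
    (hG : G = cmul (cmul U (blockT Sr 0 0 0)) (conjT V))
    (hA : A = cmul (cmul V (blockT X B C E)) (conjT U)) :
    ((∃ Y, IsInvAlong A G Y) ↔ ∃ W, IsInverse X W) ∧
      ∀ W, IsInverse X W →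
        IsInvAlong A G (cmul (cmul U (blockT W 0 0 0)) (conjT V)) :=
  stmt10_general A G U V Sr X B C E hU hV hSrInv hG hA
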